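/- arXiv:cs/0403040 — 2 statements merged into one kernel-verified Lean document; each statement's English description precedes it below -/
import Mathlib

section
/- The transition relation of the Markov chain M' on simply connected acyclic digraphs is symmetric: if there is a single transition from state X to state Y with X ≠ Y, then there is a single transition from Y to X. -/
/-- A digraph given by its arc set is acyclic if no vertex lies on a directed cycle. -/
def DAcyclic {V : Type*} (A : Finset (V × V)) : Prop :=
  ∀ a : V, ¬ Relation.TransGen (fun x y => (x, y) ∈ A) a a

/-- The underlying undirected simple graph of an arc set. -/
def toGraph {V : Type*} [DecidableEq V] (A : Finset (V × V)) : SimpleGraph V where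
  Adj a b := a ≠ b ∧ ((a, b) ∈ A ∨ (b, a) ∈ A)
  symm := ⟨fun _ _ h => ⟨h.1.symm, h.2.symm⟩⟩
  loopless := ⟨fun _ h => h.1 rfl⟩

instance {V : Type*} [DecidableEq V] (A : Finset (V × V)) :
    DecidableRel (toGraph A).Adj :=
  fun a b => inferInstanceAs (Decidable (a ≠ b ∧ ((a, b) ∈ A ∨ (b, a) ∈ A)))

/-- One transition of the Markov chain `M'`: delete a non-bridge arc, reverse a
bridge arc, or add an arc so that the result is acyclic. -/
def Move {V : Type*} [DecidableEq V] (X Y : Finset (V × V)) : Prop :=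
  (∃ i j : V, (i, j) ∈ X ∧ ¬(toGraph X).IsBridge s(i, j) ∧ Y = X.erase (i, j)) ∨
  (∃ i j : V, (i, j) ∈ X ∧ (toGraph X).IsBridge s(i, j) ∧
    Y = insert (j, i) (X.erase (i, j))) ∨
  (∃ i j : V, (i, j) ∉ X ∧ Y = insert (i, j) X ∧ DAcyclic Y)

/-!
A transition is undone by a transition of another kind: a deletion by adding the arc back
(the result is the old, acyclic graph), a bridge reversal by reversing the arc again (reversal
does not change the underlying undirected graph, so the arc is still a bridge), and an addition
by deleting the arc again, which is not a bridge because the old graph already connects its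
ends and the arc is not present there in either orientation.
-/

lemma DAcyclic.swap_notMem {V : Type*} {A : Finset (V × V)} (hA : DAcyclic A) {i j : V}
    (h : (i, j) ∈ A) : (j, i) ∉ A := fun h' =>
  hA i (.head h (.single h'))

section

variable {V : Type*} [DecidableEq V] {X : Finset (V × V)} {i j : V}

lemma toGraph_mono {A B : Finset (V × V)} (h : A ⊆ B) : toGraph A ≤ toGraph B :=
  fun _ _ hab => ⟨hab.1, hab.2.imp (@h _) (@h _)⟩

lemma toGraph_insert_swap_erase (hmem : (i, j) ∈ X) :
    toGraph (insert (j, i) (X.erase (i, j))) = toGraph X := by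
  ext a b
  simp only [toGraph, Finset.mem_insert, Finset.mem_erase, Prod.mk.injEq]
  grind

lemma toGraph_le_deleteEdges_insert (hij : (i, j) ∉ X) (hji : (j, i) ∉ X) :
    toGraph X ≤ (toGraph (insert (i, j) X)).deleteEdges {s(i, j)} := by
  intro a b hab
  rw [SimpleGraph.deleteEdges_adj, Set.mem_singleton_iff, Sym2.eq_iff]
  refine ⟨toGraph_mono (Finset.subset_insert _ _) hab, ?_⟩
  rintro (⟨rfl, rfl⟩ | ⟨rfl, rfl⟩)
  · exact hab.2.elim hij hji
  · exact hab.2.elim hji hij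

lemma not_isBridge_toGraph_insert (hX : (toGraph X).Preconnected) (hij : (i, j) ∉ X)
    (hji : (j, i) ∉ X) :
    ¬(toGraph (insert (i, j) X)).IsBridge s(i, j) := by
  rw [SimpleGraph.isBridge_iff, not_not]
  exact (hX i j).mono (toGraph_le_deleteEdges_insert hij hji)

lemma move_erase (hX : DAcyclic X) (hmem : (i, j) ∈ X) : Move (X.erase (i, j)) X :=
  .inr <| .inr ⟨i, j, Finset.notMem_erase _ _, (Finset.insert_erase hmem).symm, hX⟩

lemma move_insert_swap_erase (hX : DAcyclic X) (hmem : (i, j) ∈ X)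
    (hbr : (toGraph X).IsBridge s(i, j)) :
    Move (insert (j, i) (X.erase (i, j))) X := by
  have hji : (j, i) ∉ X.erase (i, j) := fun h => hX.swap_notMem hmem (Finset.mem_of_mem_erase h)
  refine .inr <| .inl ⟨j, i, Finset.mem_insert_self _ _, ?_, ?_⟩
  · rwa [toGraph_insert_swap_erase hmem, Sym2.eq_swap]
  · rw [Finset.erase_insert hji, Finset.insert_erase hmem]

lemma move_insert (hX : (toGraph X).Preconnected) (hij : (i, j) ∉ X)
    (hY : DAcyclic (insert (i, j) X)) :
    Move (insert (i, j) X) X := by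
  have hji : (j, i) ∉ X := fun h =>
    hY.swap_notMem (Finset.mem_insert_self _ _) (Finset.mem_insert_of_mem h)
  exact .inl ⟨i, j, Finset.mem_insert_self _ _, not_isBridge_toGraph_insert hX hij hji,
    (Finset.erase_insert hij).symm⟩

end

theorem stmt_12_general {V : Type*} [DecidableEq V] (X Y : Finset (V × V))
    (hX : (toGraph X).Connected ∧ DAcyclic X)
    (hY : (toGraph Y).Connected ∧ DAcyclic Y)
    (h : Move X Y) : Move Y X := by
  rcases h with ⟨i, j, hmem, -, rfl⟩ | ⟨i, j, hmem, hbr, rfl⟩ | ⟨i, j, hij, rfl, -⟩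
  · exact move_erase hX.2 hmem
  · exact move_insert_swap_erase hX.2 hmem hbr
  · exact move_insert hX.1.preconnected hij hY.2

/-- The transition relation of `M'` is symmetric on simply connected acyclic
digraphs. -/
theorem stmt_12 {V : Type*} [DecidableEq V] (X Y : Finset (V × V))
    (hX : (toGraph X).Connected ∧ DAcyclic X)
    (hY : (toGraph Y).Connected ∧ DAcyclic Y)
    (hne : X ≠ Y) (h : Move X Y) : Move Y X :=
  stmt_12_general X Y hX hY h
end

section
/- Let C be a dichain on V = {1,…,N}, N ≥ 3, with underlying path v_1,…,v_N, and suppose v_j = 1 for some j > 1. Then some arc between v_N and v_1 can be added to C preserving acyclicity, after which the arc corresponding to the edge {v_{j−1}, v_j} is not a bridge; deleting it yields a dichain whose underlying path starts at vertex 1. -/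
open SimpleGraph Relation

section DAcyclic

variable {V : Type*} {A B : Finset (V × V)}

theorem DAcyclic.mono (hB : DAcyclic B) (h : A ⊆ B) : DAcyclic A :=
  fun a ha => hB a (TransGen.mono (fun _ _ hab => h hab) a a ha)

theorem DAcyclic.swap_notMem_s13 (hA : DAcyclic A) {f : V × V} (hf : f ∈ A) : f.swap ∉ A :=
  fun h => hA f.1 (.tail (.single hf) h)

variable [DecidableEq V]

theorem DAcyclic.swap_notMem_insert (hA : DAcyclic A) {e f : V × V} (hf : f ∈ A)
    (he : e.swap ∉ A) : f.swap ∉ insert e A := by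
  rw [Finset.mem_insert, not_or]
  exact ⟨fun hfe => he (hfe ▸ hf), hA.swap_notMem_s13 hf⟩

theorem transGen_insert {x y u w : V}
    (h : TransGen (fun a b => (a, b) ∈ insert (x, y) A) u w) :
    TransGen (fun a b => (a, b) ∈ A) u w ∨
      ReflTransGen (fun a b => (a, b) ∈ A) u x ∧ ReflTransGen (fun a b => (a, b) ∈ A) y w := by
  induction h with
  | single hab =>
    rcases Finset.mem_insert.mp hab with hxy | hab
    · cases hxy
      exact .inr ⟨.refl, .refl⟩
    · exact .inl (.single hab)
  | tail _ hbc ih =>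
    rcases Finset.mem_insert.mp hbc with hxy | hbc
    · cases hxy
      exact .inr ⟨ih.elim TransGen.to_reflTransGen And.left, .refl⟩
    · exact ih.imp (·.tail hbc) fun ⟨hux, hyb⟩ => ⟨hux, hyb.tail hbc⟩

theorem DAcyclic.insert_of_not_reflTransGen (hA : DAcyclic A) {x y : V}
    (hyx : ¬ ReflTransGen (fun a b => (a, b) ∈ A) y x) : DAcyclic (insert (x, y) A) :=
  fun a ha => (transGen_insert ha).elim (hA a) fun ⟨hax, hya⟩ => hyx (hya.trans hax)

theorem DAcyclic.exists_insert (hA : DAcyclic A) {x y : V} (hxy : x ≠ y) :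
    ∃ e, (e = (x, y) ∨ e = (y, x)) ∧ DAcyclic (insert e A) := by
  by_cases hyx : ReflTransGen (fun a b => (a, b) ∈ A) y x
  · refine ⟨(y, x), .inr rfl, hA.insert_of_not_reflTransGen fun hxy' => ?_⟩
    have htrans := (reflTransGen_iff_eq_or_transGen.mp hxy').resolve_left hxy.symm
    exact hA x (htrans.trans_left hyx)
  · exact ⟨(x, y), .inl rfl, hA.insert_of_not_reflTransGen hyx⟩

end DAcyclic

section toGraph

variable {V : Type*} [DecidableEq V] {A : Finset (V × V)}

theorem toGraph_adj {a b : V} : (toGraph A).Adj a b ↔ a ≠ b ∧ ((a, b) ∈ A ∨ (b, a) ∈ A) :=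
  .rfl

theorem toGraph_insert (e : V × V) : toGraph (insert e A) = toGraph A ⊔ edge e.1 e.2 := by
  ext a b
  simp only [toGraph_adj, sup_adj, edge_adj, Finset.mem_insert, Prod.ext_iff]
  tauto

theorem toGraph_erase {f : V × V} (hf : f.swap ∉ A) :
    toGraph (A.erase f) = (toGraph A).deleteEdges {s(f.1, f.2)} := by
  obtain ⟨p, q⟩ := f
  ext a b
  simp only [toGraph_adj, deleteEdges_adj, Finset.mem_erase, Set.mem_singleton_iff, Sym2.eq_iff]
  grind

end toGraph

theorem comap_deleteEdges_sup_edge {V W : Type*} {f : W → V} (hf : f.Injective)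
    (G : SimpleGraph V) (x y p q : W) :
    ((G ⊔ edge (f x) (f y)).deleteEdges {s(f p, f q)}).comap f =
      (G.comap f ⊔ edge x y).deleteEdges {s(p, q)} := by
  ext a b
  simp only [comap_adj, deleteEdges_adj, sup_adj, edge_adj, Set.mem_singleton_iff,
    Sym2.eq_iff, hf.eq_iff, ne_eq]

/-- `pathGraph N ⊔ edge (N - 1) 0` is the `N`-cycle; cut at `{k, k + 1}` it is the path read
from `k + 1`. -/
theorem comap_addRight_pathGraph_sup_edge_deleteEdges {N k : ℕ} (hN : 3 ≤ N) (hk : k + 1 < N) :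
    ((pathGraph N ⊔ edge ⟨N - 1, by omega⟩ ⟨0, by omega⟩).deleteEdges
      {s(⟨k, by omega⟩, ⟨k + 1, hk⟩)}).comap (· + ⟨k + 1, hk⟩) = pathGraph N := by
  ext a b
  simp only [comap_adj, deleteEdges_adj, sup_adj, edge_adj, pathGraph_adj, Set.mem_singleton_iff,
    Sym2.eq_iff, Fin.ext_iff, Fin.val_add_eq_ite, ne_eq]
  have := a.isLt
  have := b.isLt
  split_ifs <;> grind

section PathOrder

variable {V : Type*} [DecidableEq V] {N : ℕ} {C : Finset (V × V)} {v : Fin N ≃ V}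

theorem notMem_of_not_pathGraph_adj (hvC : (toGraph C).comap v = pathGraph N) {a b : Fin N}
    (hab : a ≠ b) (h : ¬ (pathGraph N).Adj a b) : (v a, v b) ∉ C ∧ (v b, v a) ∉ C := by
  rw [← hvC, comap_adj, toGraph_adj, not_and, not_or] at h
  exact h (v.injective.ne hab)

theorem exists_mem_of_pathGraph_adj (hvC : (toGraph C).comap v = pathGraph N) {a b : Fin N}
    (h : (pathGraph N).Adj a b) : ∃ f ∈ C, f = (v a, v b) ∨ f = (v b, v a) := by
  rw [← hvC, comap_adj, toGraph_adj] at h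
  rcases h.2 with hC | hC
  exacts [⟨_, hC, .inl rfl⟩, ⟨_, hC, .inr rfl⟩]

theorem comap_toGraph_erase_insert {k : ℕ} (hN : 3 ≤ N) (hk : k + 1 < N)
    (hvC : (toGraph C).comap v = pathGraph N) {e f : V × V}
    (he : e = (v ⟨N - 1, by omega⟩, v ⟨0, by omega⟩) ∨
      e = (v ⟨0, by omega⟩, v ⟨N - 1, by omega⟩))
    (hf : f = (v ⟨k, by omega⟩, v ⟨k + 1, hk⟩) ∨ f = (v ⟨k + 1, hk⟩, v ⟨k, by omega⟩))
    (hf_swap : f.swap ∉ insert e C) :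
    (toGraph ((insert e C).erase f)).comap (fun a => v (a + ⟨k + 1, hk⟩)) = pathGraph N := by
  have hD : toGraph ((insert e C).erase f) = (toGraph C ⊔ edge (v ⟨N - 1, by omega⟩)
      (v ⟨0, by omega⟩)).deleteEdges {s(v ⟨k, by omega⟩, v ⟨k + 1, hk⟩)} := by
    rw [toGraph_erase hf_swap, toGraph_insert]
    rcases he with rfl | rfl <;> rcases hf with rfl | rfl <;> simp only [edge_comm, Sym2.eq_swap]
  rw [← comap_addRight_pathGraph_sup_edge_deleteEdges hN hk, ← hvC,
    ← comap_deleteEdges_sup_edge v.injective, ← hD]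
  rfl

end PathOrder

theorem preconnected_of_comap_eq_pathGraph {V : Type*} {G : SimpleGraph V} {N : ℕ}
    (w : Fin N ≃ V) (h : G.comap w = pathGraph N) : G.Preconnected :=
  (pathGraph_preconnected N).map ⟨w, fun hab => by rwa [← h] at hab⟩ w.surjective

-- Positions and vertices are `0`-indexed: the paper's vertex `1` is `0 : Fin N` and its `v_i` is
-- `v ⟨i - 1, _⟩`, so `j = k + 2`.
/-- Turning the vertex `1` (here `0 : Fin N`) into the first vertex of a dichain:
adding an arc between the endpoints of the path and deleting the now non-bridge arc
entering `1` yields a dichain whose underlying path starts at `1`. -/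
theorem stmt_13 (N : ℕ) (hN : 3 ≤ N) (C : Finset (Fin N × Fin N))
    (hC : DAcyclic C) (v : Fin N ≃ Fin N)
    (hv : ∀ a b : Fin N, (toGraph C).Adj (v a) (v b) ↔
      (a.val + 1 = b.val ∨ b.val + 1 = a.val))
    (k : ℕ) (hk : k + 1 < N) (h1 : v ⟨k + 1, hk⟩ = (⟨0, by omega⟩ : Fin N)) :
    ∃ e : Fin N × Fin N,
      (e = (v ⟨N - 1, by omega⟩, v ⟨0, by omega⟩) ∨
        e = (v ⟨0, by omega⟩, v ⟨N - 1, by omega⟩)) ∧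
      e ∉ C ∧ DAcyclic (insert e C) ∧
      ∃ f ∈ C,
        (f = (v ⟨k, by omega⟩, v ⟨k + 1, hk⟩) ∨
          f = (v ⟨k + 1, hk⟩, v ⟨k, by omega⟩)) ∧
        ¬(toGraph (insert e C)).IsBridge s(f.1, f.2) ∧
        DAcyclic ((insert e C).erase f) ∧
        ∃ w : Fin N ≃ Fin N, w ⟨0, by omega⟩ = (⟨0, by omega⟩ : Fin N) ∧
          ∀ a b : Fin N, (toGraph ((insert e C).erase f)).Adj (w a) (w b) ↔
            (a.val + 1 = b.val ∨ b.val + 1 = a.val) := by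
  have : NeZero N := ⟨by omega⟩
  have hvC : (toGraph C).comap v = pathGraph N := by
    ext a b
    rw [comap_adj, hv, pathGraph_adj]
  have hne : (⟨N - 1, by omega⟩ : Fin N) ≠ ⟨0, by omega⟩ := by
    simp only [ne_eq, Fin.mk.injEq]
    omega
  have hends := notMem_of_not_pathGraph_adj hvC hne (by simp only [pathGraph_adj]; omega)
  obtain ⟨e, he, heA⟩ := hC.exists_insert (v.injective.ne hne)
  have heC : e ∉ C ∧ e.swap ∉ C := by
    rcases he with rfl | rfl
    exacts [hends, hends.symm]
  obtain ⟨f, hfC, hf⟩ := exists_mem_of_pathGraph_adj hvC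
    (pathGraph_adj.mpr (.inl rfl) : (pathGraph N).Adj ⟨k, by omega⟩ ⟨k + 1, hk⟩)
  have hf_swap := hC.swap_notMem_insert hfC heC.2
  let w := (Equiv.addRight (⟨k + 1, hk⟩ : Fin N)).trans v
  have hw : (toGraph ((insert e C).erase f)).comap w = pathGraph N :=
    comap_toGraph_erase_insert hN hk hvC he hf hf_swap
  refine ⟨e, he, heC.1, heA, f, hfC, hf, fun hbridge => ?_, heA.mono (Finset.erase_subset _ _),
    w, by simpa [w] using h1, fun a b => by rw [← pathGraph_adj, ← hw]; rfl⟩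
  rw [toGraph_erase hf_swap] at hw
  exact hbridge (preconnected_of_comap_eq_pathGraph w hw _ _)
end
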